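/- The generalized Gray map Φ: ∏_{i=1}^n Z_{2^i}^{α_i} → Z_2^s, with s = Σ_{j=1}^n 2^{j−1} α_j, satisfies d_H(Φ(u), Φ(v)) = d(u, v) for all u, v ∈ ∏_{i=1}^n Z_{2^i}^{α_i}, where d is the distance induced by the weight wt(v_1,…,v_n) = wt_H(v_1) + Σ_{i=2}^n wt_L(v_i). In particular Φ is injective. -/
import Mathlib


/-- The ambient space `∏_{i=1}^n Z_{2^i}^{α_i}` (0-indexed: block `i` has entries in
`Z_{2^{i+1}}`). -/
abbrev Amb (n : ℕ) (α : Fin n → ℕ) := ∀ i : Fin n, Fin (α i) → ZMod (2 ^ (i.1 + 1))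

/-- The Gray map `φ : Z_{2q} → Z_2^q`. -/
def grayMap (q : ℕ) (a : ZMod (2 * q)) : Fin q → ZMod 2 :=
  fun k =>
    if a.val ≤ q then (if q - a.val ≤ k.1 then 1 else 0)
    else (if k.1 < 2 * q - a.val then 1 else 0)

/-- The generalized Gray map `Φ`, applying `φ_i = grayMap (2^{i-1})` entrywise in
block `i`; the codomain is `Z_2^s` with `s = Σ 2^{i-1} α_i`, indexed block-wise. -/
def bigGray {n : ℕ} {α : Fin n → ℕ} (v : Amb n α) :
    ∀ i : Fin n, Fin (α i) → Fin (2 ^ i.1) → ZMod 2 :=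
  fun i j =>
    grayMap (2 ^ i.1)
      (ZMod.castHom (dvd_of_eq ((mul_comm 2 (2 ^ i.1)).trans (pow_succ 2 i.1).symm))
        (ZMod (2 * 2 ^ i.1)) (v i j))

/-- Hamming weight of a vector: the number of nonzero coordinates. -/
def hamWt {m M : ℕ} (x : Fin m → ZMod M) : ℕ :=
  (Finset.univ.filter fun j => x j ≠ 0).card

/-- Lee weight on `Z_M`: `min(a, M − a)`. -/
def leeWt {M : ℕ} (a : ZMod M) : ℕ := min a.val (M - a.val)

/-- Lee weight of a vector: sum of coordinatewise Lee weights. -/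
def leeWtV {m M : ℕ} (x : Fin m → ZMod M) : ℕ := ∑ j, leeWt (x j)

/-- The weight on the ambient space: Hamming weight on the binary block, Lee weight on
the other blocks. -/
def wtAmb {n : ℕ} {α : Fin n → ℕ} (v : Amb n α) : ℕ :=
  ∑ i : Fin n, if i.1 = 0 then hamWt (v i) else leeWtV (v i)

/-- Hamming distance between two images of the generalized Gray map (total number of
coordinates of `Z_2^s` where they differ). -/
def dHGray {n : ℕ} {α : Fin n → ℕ}
    (x y : ∀ i : Fin n, Fin (α i) → Fin (2 ^ i.1) → ZMod 2) : ℕ :=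
  ∑ i : Fin n, ∑ j : Fin (α i), hamWt (fun t => x i j t - y i j t)


lemma modchar (q d x : ℕ) (hq : 0 < q) (hd : d < 2*q) (hx : x < 2*q) :
    ((x + d) % (2*q) = x + d ∧ x + d < 2*q) ∨
      ((x + d) % (2*q) + 2*q = x + d) := by
  rcases lt_or_ge (x + d) (2*q) with h | h
  · exact Or.inl ⟨Nat.mod_eq_of_lt h, h⟩
  · right
    rw [Nat.mod_eq_sub_mod h, Nat.mod_eq_of_lt (by omega)]
    omega

lemma count_main (q d : ℕ) (hq : 0 < q) (hd : d < 2*q) :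
    ((Finset.range (2*q)).filter
      (fun x => ¬ (q ≤ (x + d) % (2*q) ↔ q ≤ x))).card = 2 * min d (2*q - d) := by
  rcases le_or_gt d q with hc | hc
  · have hset : (Finset.range (2*q)).filter
        (fun x => ¬ (q ≤ (x + d) % (2*q) ↔ q ≤ x))
        = Finset.Ico (q - d) q ∪ Finset.Ico (2*q - d) (2*q) := by
      ext x
      simp only [Finset.mem_filter, Finset.mem_range, Finset.mem_union, Finset.mem_Ico]
      constructor
      · rintro ⟨hx, hR⟩
        have := modchar q d x hq hd hx
        omega
      · intro h
        have hx : x < 2*q := by omega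
        have := modchar q d x hq hd hx
        exact ⟨hx, by omega⟩
    rw [hset, Finset.card_union_of_disjoint, Nat.card_Ico, Nat.card_Ico]
    · omega
    · rw [Finset.disjoint_left]
      intro x h1 h2
      simp only [Finset.mem_Ico] at h1 h2
      omega
  · have hset : (Finset.range (2*q)).filter
        (fun x => ¬ (q ≤ (x + d) % (2*q) ↔ q ≤ x))
        = Finset.Ico 0 (2*q - d) ∪ Finset.Ico q (q + (2*q - d)) := by
      ext x
      simp only [Finset.mem_filter, Finset.mem_range, Finset.mem_union, Finset.mem_Ico]
      constructor
      · rintro ⟨hx, hR⟩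
        have := modchar q d x hq hd hx
        omega
      · intro h
        have hx : x < 2*q := by omega
        have := modchar q d x hq hd hx
        exact ⟨hx, by omega⟩
    rw [hset, Finset.card_union_of_disjoint, Nat.card_Ico, Nat.card_Ico]
    · omega
    · rw [Finset.disjoint_left]
      intro x h1 h2
      simp only [Finset.mem_Ico] at h1 h2
      omega


lemma flip_msb (q y : ℕ) (hq : 0 < q) :
    (q ≤ (y + q) % (2*q)) ↔ ¬ (q ≤ y % (2*q)) := by
  have h1 : y % (2*q) < 2*q := Nat.mod_lt _ (by omega)
  have h2 : (y + q) % (2*q) = (y % (2*q) + q) % (2*q) := by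
    rw [Nat.mod_add_mod]
  rcases lt_or_ge (y % (2*q)) q with h | h
  · rw [h2, Nat.mod_eq_of_lt (by omega)]; omega
  · rw [h2, Nat.mod_eq_sub_mod (by omega), Nat.mod_eq_of_lt (by omega)]; omega

lemma R_flip (q d y : ℕ) (hq : 0 < q) :
    (¬ (q ≤ ((y + q) + d) % (2*q) ↔ q ≤ (y + q) % (2*q))) ↔
    (¬ (q ≤ (y + d) % (2*q) ↔ q ≤ y % (2*q))) := by
  have h1 := flip_msb q (y + d) hq
  have h2 := flip_msb q y hq
  have h3 : (y + q) + d = (y + d) + q := by ring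
  rw [h3, h1, h2]
  tauto

lemma count_window (q d B : ℕ) (hq : 0 < q) (hd : d < 2*q) :
    ((Finset.range q).filter
      (fun k => ¬ (q ≤ (B + d + k) % (2*q) ↔ q ≤ (B + k) % (2*q)))).card
      = min d (2*q - d) := by
  set f : ℕ → ℕ := fun x => if ¬ (q ≤ (x + d) % (2*q) ↔ q ≤ x % (2*q)) then 1 else 0
    with hf
  have hfq : ∀ y, f (y + q) = f y := by
    intro y
    simp only [hf]
    exact if_congr (R_flip q d y hq) rfl rfl
  have hfper : ∀ y, f (y + 2*q) = f y := by
    intro y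
    have : y + 2*q = (y + q) + q := by ring
    rw [this, hfq, hfq]
  -- full-circle sum is independent of the base point and equals 2 * min d (2*q - d)
  have key : ∀ C : ℕ, ∑ k ∈ Finset.range (2*q), f (C + k) = 2 * min d (2*q - d) := by
    intro C
    induction C with
    | zero =>
      simp only [Nat.zero_add]
      have : ∑ k ∈ Finset.range (2*q), f k
          = ((Finset.range (2*q)).filter
              (fun x => ¬ (q ≤ (x + d) % (2*q) ↔ q ≤ x))).card := by
        rw [Finset.card_filter]
        refine Finset.sum_congr rfl ?_
        intro x hx
        rw [Finset.mem_range] at hx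
        simp only [hf]
        exact if_congr (by rw [Nat.mod_eq_of_lt hx]) rfl rfl
      rw [this, count_main q d hq hd]
    | succ C ih =>
      have h1 := Finset.sum_range_succ' (fun k => f (C + k)) (2*q)
      have h2 := Finset.sum_range_succ (fun k => f (C + k)) (2*q)
      have h3 : ∀ k, f (C + 1 + k) = f (C + (k + 1)) := by
        intro k; congr 1; ring
      have h4 : f (C + 2*q) = f C := hfper C
      have h5 : f (C + 0) = f C := by rw [Nat.add_zero]
      calc ∑ k ∈ Finset.range (2*q), f (C + 1 + k)
          = ∑ k ∈ Finset.range (2*q), f (C + (k + 1)) := by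
            exact Finset.sum_congr rfl (fun k _ => h3 k)
        _ = 2 * min d (2*q - d) := by omega
  -- window sums
  have hNN' : ∑ k ∈ Finset.range q, f (B + q + k) = ∑ k ∈ Finset.range q, f (B + k) := by
    refine Finset.sum_congr rfl ?_
    intro k _
    have : B + q + k = (B + k) + q := by ring
    rw [this, hfq]
  have hsplit : ∑ k ∈ Finset.range (2*q), f (B + k)
      = ∑ k ∈ Finset.range q, f (B + k) + ∑ k ∈ Finset.range q, f (B + q + k) := by
    rw [← Finset.sum_range_add_sum_Ico (fun k => f (B + k)) (by omega : q ≤ 2*q)]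
    congr 1
    rw [Finset.sum_Ico_eq_sum_range]
    have : 2*q - q = q := by omega
    rw [this]
    exact Finset.sum_congr rfl (fun k _ => by rw [show B + (q + k) = B + q + k by ring])
  have hN : 2 * (∑ k ∈ Finset.range q, f (B + k)) = 2 * min d (2*q - d) := by
    have := key B
    omega
  have hgoal : ((Finset.range q).filter
      (fun k => ¬ (q ≤ (B + d + k) % (2*q) ↔ q ≤ (B + k) % (2*q)))).card
      = ∑ k ∈ Finset.range q, f (B + k) := by
    rw [Finset.card_filter]
    refine Finset.sum_congr rfl ?_
    intro k _
    simp only [hf]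
    exact if_congr (by rw [show B + k + d = B + d + k by ring]) rfl rfl
  omega


lemma gray_eq (q : ℕ) (hq : 0 < q) (a : ZMod (2*q)) (k : Fin q) :
    grayMap q a k = if q ≤ (a.val + k.1) % (2*q) then (1 : ZMod 2) else 0 := by
  haveI : NeZero (2*q) := ⟨by omega⟩
  have hav : a.val < 2*q := ZMod.val_lt a
  have hk : k.1 < q := k.2
  unfold grayMap
  rcases le_or_gt a.val q with h | h
  · rw [if_pos h, Nat.mod_eq_of_lt (by omega)]
    exact if_congr (by omega) rfl rfl
  · rw [if_neg (by omega)]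
    rcases lt_or_ge (k.1) (2*q - a.val) with h2 | h2
    · rw [if_pos h2, if_pos (by rw [Nat.mod_eq_of_lt (by omega)]; omega)]
    · rw [if_neg (by omega), if_neg]
      rw [Nat.mod_eq_sub_mod (by omega), Nat.mod_eq_of_lt (by omega)]
      omega

lemma ite_ne_ite (P1 P2 : Prop) [Decidable P1] [Decidable P2] :
    ((if P1 then (1 : ZMod 2) else 0) ≠ if P2 then 1 else 0) ↔ ¬ (P1 ↔ P2) := by
  by_cases h1 : P1 <;> by_cases h2 : P2 <;> simp [h1, h2] <;> decide

lemma leeWt_eq_zero_iff {M : ℕ} [NeZero M] (a : ZMod M) : leeWt a = 0 ↔ a = 0 := by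
  have h1 : a.val < M := ZMod.val_lt a
  unfold leeWt
  rw [Nat.min_eq_zero_iff]
  constructor
  · intro h
    have : a.val = 0 := by omega
    exact (ZMod.val_eq_zero a).mp this
  · intro h; subst h
    simp [ZMod.val_zero]

lemma gray_dist (q : ℕ) (hq : 0 < q) (a b : ZMod (2*q)) :
    hamWt (fun k : Fin q => grayMap q a k - grayMap q b k) = leeWt (a - b) := by
  haveI : NeZero (2*q) := ⟨by omega⟩
  set d := (a - b).val with hdd
  have hd : d < 2*q := ZMod.val_lt _
  have hab : a.val = (b.val + d) % (2*q) := by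
    have : a = b + (a - b) := by ring
    rw [this, ZMod.val_add]
  have key : ∀ k : ℕ, (a.val + k) % (2*q) = (b.val + d + k) % (2*q) := by
    intro k
    rw [hab, Nat.mod_add_mod]
  have hB : b.val < 2*q := ZMod.val_lt b
  unfold hamWt
  have hfe : ∀ k : Fin q,
      ((grayMap q a k - grayMap q b k) ≠ 0) ↔
        ¬ (q ≤ (b.val + d + k.1) % (2*q) ↔ q ≤ (b.val + k.1) % (2*q)) := by
    intro k
    rw [sub_ne_zero, gray_eq q hq a k, gray_eq q hq b k, ite_ne_ite, key k.1]
  rw [Finset.filter_congr (fun k _ => by rw [hfe k])]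
  -- now count over Fin q, convert to range q
  rw [Finset.card_filter, Fin.sum_univ_eq_sum_range
    (fun k => if ¬ (q ≤ (b.val + d + k) % (2*q) ↔ q ≤ (b.val + k) % (2*q)) then 1 else 0) q,
    ← Finset.card_filter]
  rw [count_window q d b.val hq hd]
  unfold leeWt
  rfl


lemma leeWt_cast {m n : ℕ} (h : m = n) (x : ZMod n) :
    leeWt ((ZMod.castHom (dvd_of_eq h) (ZMod m)) x) = leeWt x := by
  subst h
  simp [leeWt, ZMod.castHom_apply, ZMod.cast_id]

lemma hamWt_eq_leeWtV {m M : ℕ} (hM : M = 2) (x : Fin m → ZMod M) :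
    hamWt x = leeWtV x := by
  subst hM
  unfold hamWt leeWtV
  rw [Finset.card_filter]
  refine Finset.sum_congr rfl (fun j _ => ?_)
  have : ∀ a : ZMod 2, (if a ≠ 0 then 1 else 0) = leeWt a := by decide
  exact this (x j)

/-- the generalized Gray map satisfies `d_H(Φ(u), Φ(v)) = d(u, v)`,
where `d(u,v) = wt(u − v)`; in particular `Φ` is injective. -/
theorem stmt_8 (n : ℕ) (hn : 1 ≤ n) (α : Fin n → ℕ) (hα : ∀ i, 0 < α i) :
    (∀ u v : Amb n α, dHGray (bigGray u) (bigGray v) = wtAmb (u - v)) ∧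
    Function.Injective (bigGray (n := n) (α := α)) := by
  have main : ∀ u v : Amb n α, dHGray (bigGray u) (bigGray v) = wtAmb (u - v) := by
    intro u v
    unfold dHGray wtAmb
    have hblock : ∀ i : Fin n, ∑ j : Fin (α i),
        hamWt (fun t => bigGray u i j t - bigGray v i j t) = leeWtV ((u - v) i) := by
      intro i
      unfold leeWtV
      refine Finset.sum_congr rfl (fun j _ => ?_)
      unfold bigGray
      rw [gray_dist (2 ^ i.1) (pow_pos (by norm_num) _) _ _, ← map_sub, leeWt_cast]
      · rfl
      · ring
    refine Finset.sum_congr rfl (fun i _ => ?_)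
    rw [hblock i]
    by_cases h : i.1 = 0
    · rw [if_pos h, hamWt_eq_leeWtV (by rw [h]; norm_num)]
    · rw [if_neg h]
  refine ⟨main, ?_⟩
  intro u v huv
  have h0 : dHGray (bigGray u) (bigGray v) = 0 := by
    rw [huv]
    unfold dHGray hamWt
    simp
  rw [main u v] at h0
  have hz : u - v = 0 := by
    unfold wtAmb at h0
    rw [Finset.sum_eq_zero_iff] at h0
    funext i j
    have hi := h0 i (Finset.mem_univ i)
    haveI : NeZero (2 ^ (i.1 + 1)) := ⟨by positivity⟩
    by_cases h : i.1 = 0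
    · rw [if_pos h] at hi
      unfold hamWt at hi
      rw [Finset.card_eq_zero, Finset.filter_eq_empty_iff] at hi
      have := hi (Finset.mem_univ j)
      simp only [not_not] at this
      simpa using this
    · rw [if_neg h] at hi
      unfold leeWtV at hi
      rw [Finset.sum_eq_zero_iff] at hi
      have := (leeWt_eq_zero_iff _).mp (hi j (Finset.mem_univ j))
      simpa using this
  have := sub_eq_zero.mp hz
  exact this
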